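/- arXiv:1901.05410 — 3 statements merged into one kernel-verified Lean document; each statement's English description precedes it below -/
import Mathlib

section
/- Let μ be a probability measure on ℝ with finite second moment whose support contains at least two points, and let I_μ = (inf(supp μ), sup(supp μ)) be the interior of the smallest closed interval containing the support of μ. Define G(t,y) = (∫_ℝ u exp(uy − u²t/2) μ(du)) / (∫_ℝ exp(uy − u²t/2) μ(du)). Then for every fixed t > 0, the map y ↦ G(t,y) is a strictly increasing continuous bijection from ℝ onto I_μ. -/
open MeasureTheory ProbabilityTheory Real Filter Set
open scoped ENNReal NNReal

noncomputable section

/-- The Gaussian likelihood kernel `exp(u y - u^2 t / 2)`. -/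
def gker (t y u : ℝ) : ℝ := Real.exp (u * y - u ^ 2 * t / 2)

/-- The Widder transform `F(t,y) = ∫ exp(u y - u² t/2) μ(du)` of the measure `μ`. -/
def Fw (μ : Measure ℝ) (t y : ℝ) : ℝ := ∫ u, gker t y u ∂μ

/-- The posterior-mean function `G(t,y)`. -/
def Gp (μ : Measure ℝ) (t y : ℝ) : ℝ := (∫ u, u * gker t y u ∂μ) / Fw μ t y

/-- The posterior-variance function `H(t,y)`. -/
def Hp (μ : Measure ℝ) (t y : ℝ) : ℝ :=
  (∫ u, u ^ 2 * gker t y u ∂μ) / Fw μ t y - (Gp μ t y) ^ 2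

/-- The (topological) support of a measure on `ℝ`. -/
def msupport (μ : Measure ℝ) : Set ℝ := {x | ∀ U ∈ nhds x, μ U ≠ 0}

/-- `I_μ`: the interior of the smallest closed interval containing the support of `μ`,
i.e. the open interval `(inf (supp μ), sup (supp μ))`. -/
def Imu (μ : Measure ℝ) : Set ℝ := interior (convexHull ℝ (msupport μ))

/-- The dispersion function in estimate coordinates: `Ψ(t,x) = H(t, G(t,·)⁻¹(x))`. -/
def Psi (μ : Measure ℝ) (t x : ℝ) : ℝ := Hp μ t (Function.invFun (Gp μ t) x)

/-- The natural sigma-algebra generated by the observation process `Y` up to time `t`. -/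
def natSigma {Ω : Type*} [MeasurableSpace Ω] (Y : ℝ → Ω → ℝ) (t : ℝ) : MeasurableSpace Ω :=
  ⨆ s ∈ Set.Icc (0 : ℝ) t, MeasurableSpace.comap (Y s) inferInstance

/-- The right-continuous augmentation `F^Y(t) = ⋂_{s > t} σ(Y_r, r ≤ s)`
of the filtration generated by `Y`. -/
def obsFiltration {Ω : Type*} [MeasurableSpace Ω] (Y : ℝ → Ω → ℝ) (t : ℝ) :
    MeasurableSpace Ω :=
  ⨅ s ∈ Set.Ioi t, natSigma Y s

/-- A process `W` is a standard Brownian motion under the probability measure `P`: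
it starts at `0`, has continuous paths, Gaussian increments `W t - W s ~ N(0, t - s)`,
and independent increments. -/
structure IsStdBM {Ω : Type*} [MeasurableSpace Ω] (P : Measure Ω) (W : ℝ → Ω → ℝ) : Prop where
  measurable : ∀ t : ℝ, Measurable (W t)
  init : ∀ ω, W 0 ω = 0
  cont : ∀ ω, Continuous fun t => W t ω
  incrLaw : ∀ ⦃s t : ℝ⦄, 0 ≤ s → s ≤ t →
    Measure.map (fun ω => W t ω - W s ω) P = gaussianReal 0 (Real.toNNReal (t - s))
  indepIncr : ∀ (n : ℕ) (ts : Fin (n + 1) → ℝ), Monotone ts → 0 ≤ ts 0 →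
    iIndepFun
      (fun (i : Fin n) ω => W (ts i.succ) ω - W (ts i.castSucc) ω) P

/-- A stopping time of the observation filtration `F^Y`:
`{τ ≤ t} ∈ F^Y(t)` for every `t`. -/
def IsObsStoppingTime {Ω : Type*} [MeasurableSpace Ω] (Y : ℝ → Ω → ℝ) (τ : Ω → ℝ) : Prop :=
  ∀ t : ℝ, MeasurableSet[obsFiltration Y t] {ω | τ ω ≤ t}

/-! For `t > 0` the functions `u ↦ uⁿ exp (u y - u² t / 2)` are bounded, locally uniformly in
`y`, so all integrals are finite and continuous in `y`, and `G(t, y)` is the mean of `μ` reweighted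
by a positive density; as `μ` is not a point mass, this mean lies strictly between two points of
the support. Moving `y` to `y + δ` multiplies the density by the increasing function `e^{uδ}`, so
Chebyshev's integral inequality for `u` and `e^{uδ}`, strict because `μ ⊗ μ` charges the
off-diagonal, makes `G(t, ·)` strictly increasing. As `y → ∞` the factor `e^{uy}` lets the mass
above any `c < sup (supp μ)` dominate, so eventually `G(t, y) > c`; reflecting `μ` handles the
lower end, and the intermediate value theorem gives surjectivity. -/

lemma mem_interior_convexHull_iff {s : Set ℝ} {x : ℝ} :
    x ∈ interior (convexHull ℝ s) ↔ (∃ p ∈ s, p < x) ∧ ∃ q ∈ s, x < q := by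
  constructor
  · intro hx
    constructor
    · by_contra! h
      have := interior_mono (convexHull_min (show s ⊆ Ici x from h) (convex_Ici x)) hx
      rw [interior_Ici] at this
      exact lt_irrefl x this
    · by_contra! h
      have := interior_mono (convexHull_min (show s ⊆ Iic x from h) (convex_Iic x)) hx
      rw [interior_Iic] at this
      exact lt_irrefl x this
  · rintro ⟨⟨p, hp, hpx⟩, q, hq, hxq⟩
    refine interior_maximal ?_ isOpen_Ioo ⟨hpx, hxq⟩
    have hseg := segment_subset_convexHull (𝕜 := ℝ) hp hq
    rw [segment_eq_Icc (hpx.trans hxq).le] at hseg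
    exact Ioo_subset_Icc_self.trans hseg

section Support

variable {μ : Measure ℝ}

lemma msupport_eq_support (μ : Measure ℝ) : msupport μ = μ.support := by
  ext x
  simp only [msupport, mem_ofPred_eq, Measure.mem_support_iff_forall, pos_iff_ne_zero]

lemma ae_mem_msupport (μ : Measure ℝ) : ∀ᵐ u ∂μ, u ∈ msupport μ := by
  rw [msupport_eq_support]
  exact Measure.support_mem_ae

lemma eq_of_mem_msupport_of_ae_eq {m a : ℝ} (h : ∀ᵐ u ∂μ, u = m) (ha : a ∈ msupport μ) :
    a = m := by
  by_contra hne
  exact ha {m}ᶜ (isOpen_compl_singleton.mem_nhds hne) (ae_iff.1 h)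

lemma measure_prod_setOf_ne_ne_zero [SFinite μ] {a b : ℝ} (ha : a ∈ msupport μ)
    (hb : b ∈ msupport μ) (hab : a ≠ b) :
    (μ.prod μ) {p : ℝ × ℝ | p.1 ≠ p.2} ≠ 0 := by
  wlog hlt : a < b generalizing a b
  · exact this hb ha hab.symm (lt_of_le_of_ne (not_lt.1 hlt) hab.symm)
  obtain ⟨c, hac, hcb⟩ := exists_between hlt
  intro h0
  have := measure_mono_null (fun p hp => (hp.1.trans hp.2).ne : Iio c ×ˢ Ioi c ⊆ _) h0
  rw [Measure.prod_prod, mul_eq_zero] at this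
  exact this.elim (ha _ (Iio_mem_nhds hac)) (hb _ (Ioi_mem_nhds hcb))

lemma neg_mem_msupport_map_neg {q : ℝ} (hq : q ∈ msupport μ) :
    -q ∈ msupport (μ.map Neg.neg) := fun U hU h0 =>
  hq _ (continuous_neg.tendsto q hU) <|
    nonpos_iff_eq_zero.1 (h0 ▸ Measure.le_map_apply measurable_neg.aemeasurable U)

end Support

lemma integral_mul_integral_lt_of_strictMono {α : Type*} [LinearOrder α] [MeasurableSpace α]
    {μ : Measure α} [SFinite μ] {f g w : α → ℝ} (hf : StrictMono f) (hg : StrictMono g)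
    (hw : ∀ u, 0 < w u) (hwi : Integrable w μ) (hfw : Integrable (fun u => f u * w u) μ)
    (hgw : Integrable (fun u => g u * w u) μ)
    (hfgw : Integrable (fun u => f u * g u * w u) μ)
    (hμ : (μ.prod μ) {p : α × α | p.1 ≠ p.2} ≠ 0) :
    (∫ u, f u * w u ∂μ) * (∫ u, g u * w u ∂μ) <
      (∫ u, w u ∂μ) * ∫ u, f u * g u * w u ∂μ := by
  set Φ : α × α → ℝ := fun p => (f p.1 - f p.2) * (g p.1 - g p.2) * (w p.1 * w p.2)
  have hΦ_pos : ∀ p : α × α, p.1 ≠ p.2 → 0 < Φ p := by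
    rintro ⟨u, v⟩ (huv : u ≠ v)
    refine mul_pos ?_ (mul_pos (hw u) (hw v))
    rcases huv.lt_or_gt with h | h
    · exact mul_pos_of_neg_of_neg (sub_neg.2 (hf h)) (sub_neg.2 (hg h))
    · exact mul_pos (sub_pos.2 (hf h)) (sub_pos.2 (hg h))
  have hΦ_nonneg : 0 ≤ Φ := fun p => by
    by_cases h : p.1 = p.2
    · simp [Φ, h]
    · exact (hΦ_pos p h).le
  have hΦ_support : Function.support Φ = {p | p.1 ≠ p.2} := by
    ext p
    refine ⟨fun hp h => hp ?_, fun h => (hΦ_pos p h).ne'⟩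
    simp [Φ, h]
  have hΦ_eq : Φ = fun p => f p.1 * g p.1 * w p.1 * w p.2 - f p.1 * w p.1 * (g p.2 * w p.2)
      - g p.1 * w p.1 * (f p.2 * w p.2) + w p.1 * (f p.2 * g p.2 * w p.2) := by
    ext p
    simp only [Φ]
    ring
  have h₁ := hfgw.mul_prod hwi
  have h₂ := hfw.mul_prod hgw
  have h₃ := hgw.mul_prod hfw
  have h₄ := hwi.mul_prod hfgw
  have hΦ_int : Integrable Φ (μ.prod μ) := hΦ_eq ▸ ((h₁.sub h₂).sub h₃).add h₄
  have hint : ∫ p, Φ p ∂(μ.prod μ) = 2 * ((∫ u, w u ∂μ) * (∫ u, f u * g u * w u ∂μ)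
      - (∫ u, f u * w u ∂μ) * ∫ u, g u * w u ∂μ) := by
    rw [hΦ_eq, integral_add, integral_sub, integral_sub,
      integral_prod_mul (fun u => f u * g u * w u) w,
      integral_prod_mul (fun u => f u * w u) (fun u => g u * w u),
      integral_prod_mul (fun u => g u * w u) (fun u => f u * w u),
      integral_prod_mul w (fun u => f u * g u * w u)]
    · ring
    exacts [h₁, h₂, h₁.sub h₂, h₃, (h₁.sub h₂).sub h₃, h₄]
  have := (integral_pos_iff_support_of_nonneg hΦ_nonneg hΦ_int).2
    (hΦ_support ▸ pos_iff_ne_zero.2 hμ)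
  linarith

lemma integral_mul_div_integral_mem_Imu {μ : Measure ℝ} {w : ℝ → ℝ} (hw : ∀ u, 0 < w u)
    (hwi : Integrable w μ) (huw : Integrable (fun u => u * w u) μ) {a b : ℝ}
    (ha : a ∈ msupport μ) (hb : b ∈ msupport μ) (hab : a ≠ b) :
    (∫ u, u * w u ∂μ) / (∫ u, w u ∂μ) ∈ Imu μ := by
  set m := (∫ u, u * w u ∂μ) / (∫ u, w u ∂μ)
  have hW : 0 < ∫ u, w u ∂μ := by
    rw [integral_pos_iff_support_of_nonneg (fun u => (hw u).le) hwi,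
      Function.support_eq_univ fun u => (hw u).ne']
    exact pos_iff_ne_zero.2 (ha univ univ_mem)
  have hi : Integrable (fun u => (u - m) * w u) μ := by
    simp only [sub_mul]
    exact huw.sub (hwi.const_mul m)
  have hm : m * ∫ u, w u ∂μ = ∫ u, u * w u ∂μ := div_mul_cancel₀ _ hW.ne'
  have hbal : ∫ u, (u - m) * w u ∂μ = 0 := by
    simp only [sub_mul]
    rw [integral_sub huw (hwi.const_mul m), integral_const_mul, hm, sub_self]
  have hdirac : ¬ ∀ᵐ u ∂μ, u = m := fun h =>
    hab ((eq_of_mem_msupport_of_ae_eq h ha).trans (eq_of_mem_msupport_of_ae_eq h hb).symm)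
  rw [Imu, mem_interior_convexHull_iff]
  constructor
  · by_contra! h
    have hnn : 0 ≤ᵐ[μ] fun u => (u - m) * w u := (ae_mem_msupport μ).mono fun u hu =>
      mul_nonneg (sub_nonneg.2 (h u hu)) (hw u).le
    refine hdirac ((integral_eq_zero_iff_of_nonneg_ae hnn hi).1 hbal |>.mono fun u hu => ?_)
    simpa [(hw u).ne', sub_eq_zero] using hu
  · by_contra! h
    have hnn : 0 ≤ᵐ[μ] fun u => -((u - m) * w u) := (ae_mem_msupport μ).mono fun u hu =>
      neg_nonneg.2 (mul_nonpos_of_nonpos_of_nonneg (sub_nonpos.2 (h u hu)) (hw u).le)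
    refine hdirac ((integral_eq_zero_iff_of_nonneg_ae hnn hi.neg).1
      (by rw [integral_neg, hbal, neg_zero]) |>.mono fun u hu => ?_)
    simpa [(hw u).ne', sub_eq_zero] using hu

section GaussianKernel

variable {μ : Measure ℝ} {t : ℝ}

lemma gker_pos (t y u : ℝ) : 0 < gker t y u := exp_pos _

lemma gker_add (t y δ u : ℝ) : gker t (y + δ) u = exp (u * δ) * gker t y u := by
  rw [gker, gker, ← exp_add]
  ring_nf

lemma gker_neg (t y u : ℝ) : gker t y (-u) = gker t (-y) u := by
  rw [gker, gker]
  ring_nf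

lemma norm_pow_mul_gker_le (ht : 0 < t) (n : ℕ) {y c : ℝ} (hy : |y| ≤ c) (u : ℝ) :
    ‖u ^ n * gker t y u‖ ≤ exp ((n + c) ^ 2 / (2 * t)) := by
  have hpow : |u| ^ n ≤ exp (n * |u|) := by
    rw [exp_nat_mul]
    exact pow_le_pow_left₀ (abs_nonneg u) ((le_add_of_nonneg_right zero_le_one).trans
      (add_one_le_exp _)) n
  have huy : u * y ≤ c * |u| := by
    calc u * y ≤ |u| * |y| := (le_abs_self _).trans (abs_mul u y).le
      _ ≤ c * |u| := by rw [mul_comm]; exact mul_le_mul_of_nonneg_right hy (abs_nonneg u)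
  have hexp : n * |u| + (u * y - u ^ 2 * t / 2) ≤ (n + c) ^ 2 / (2 * t) := by
    rw [le_div_iff₀ (by positivity), ← sq_abs u]
    nlinarith [sq_nonneg (n + c - t * |u|), mul_le_mul_of_nonneg_right huy ht.le]
  calc ‖u ^ n * gker t y u‖ = |u| ^ n * gker t y u := by
        rw [norm_mul, norm_pow, norm_eq_abs, norm_of_nonneg (gker_pos t y u).le]
    _ ≤ exp (n * |u|) * gker t y u := by gcongr; exact (gker_pos t y u).le
    _ = exp (n * |u| + (u * y - u ^ 2 * t / 2)) := by rw [gker, exp_add]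
    _ ≤ _ := exp_le_exp.2 hexp

lemma integrable_pow_mul_gker [IsFiniteMeasure μ] (ht : 0 < t) (n : ℕ) (y : ℝ) :
    Integrable (fun u => u ^ n * gker t y u) μ :=
  (integrable_const _).mono' (Continuous.aestronglyMeasurable (by unfold gker; fun_prop))
    (Eventually.of_forall (norm_pow_mul_gker_le ht n le_rfl))

lemma integrable_gker [IsFiniteMeasure μ] (ht : 0 < t) (y : ℝ) :
    Integrable (gker t y) μ := by
  simpa using integrable_pow_mul_gker (μ := μ) ht 0 y

lemma integrable_mul_gker [IsFiniteMeasure μ] (ht : 0 < t) (y : ℝ) :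
    Integrable (fun u => u * gker t y u) μ := by
  simpa using integrable_pow_mul_gker (μ := μ) ht 1 y

lemma continuous_integral_pow_mul_gker [IsFiniteMeasure μ] (ht : 0 < t) (n : ℕ) :
    Continuous fun y => ∫ u, u ^ n * gker t y u ∂μ := by
  refine continuous_iff_continuousAt.2 fun y₀ => continuousAt_of_dominated
    (bound := fun _ => exp ((n + (|y₀| + 1)) ^ 2 / (2 * t)))
    (Eventually.of_forall fun y => (integrable_pow_mul_gker ht n y).aestronglyMeasurable)
    ?_ (integrable_const _) (Eventually.of_forall fun u => by unfold gker; fun_prop)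
  filter_upwards [Metric.ball_mem_nhds y₀ one_pos] with y hy
  refine Eventually.of_forall (norm_pow_mul_gker_le ht n ?_)
  rw [Metric.mem_ball, dist_eq] at hy
  linarith [abs_sub_abs_le_abs_sub y y₀, (abs_lt.1 hy).2]

lemma Fw_pos [IsFiniteMeasure μ] [NeZero μ] (ht : 0 < t) (y : ℝ) : 0 < Fw μ t y :=
  integral_exp_pos (integrable_gker ht y)

lemma neg_exp_le_sub_mul_gker {y : ℝ} (ht : 0 ≤ t) (hy : 1 ≤ y) (c u : ℝ) :
    -exp (c * y) ≤ (u - c) * gker t y u := by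
  rcases le_or_gt c u with hcu | hcu
  · exact (neg_nonpos.2 (exp_pos _).le).trans
      (mul_nonneg (sub_nonneg.2 hcu) (gker_pos t y u).le)
  have hcu' : c - u ≤ exp ((c - u) * y) :=
    calc c - u ≤ (c - u) * y := le_mul_of_one_le_right (sub_pos.2 hcu).le hy
      _ ≤ exp ((c - u) * y) := (le_add_of_nonneg_right zero_le_one).trans (add_one_le_exp _)
  have hker : gker t y u ≤ exp (u * y) := exp_le_exp.2 (by nlinarith [sq_nonneg u])
  have : (c - u) * gker t y u ≤ exp (c * y) :=
    calc (c - u) * gker t y u ≤ exp ((c - u) * y) * exp (u * y) :=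
          mul_le_mul hcu' hker (gker_pos t y u).le (exp_pos _).le
      _ = exp (c * y) := by rw [← exp_add]; ring_nf
  linarith

lemma le_sub_mul_gker_of_mem_Ioo {y : ℝ} (ht : 0 ≤ t) (hy : 0 ≤ y) {a b c u : ℝ}
    (hca : c ≤ a) (hu : u ∈ Ioo a b) :
    (a - c) * exp (a * y - (a ^ 2 + b ^ 2) * t / 2) ≤ (u - c) * gker t y u := by
  have hsq : u ^ 2 ≤ a ^ 2 + b ^ 2 := by
    rcases le_total 0 u with h | h <;> nlinarith [hu.1, hu.2]
  refine mul_le_mul (by linarith [hu.1]) (exp_le_exp.2 ?_) (exp_pos _).le (by linarith [hu.1])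
  nlinarith [mul_le_mul_of_nonneg_right hu.1.le hy, mul_le_mul_of_nonneg_right hsq ht]

end GaussianKernel

section PosteriorMean

variable {μ : Measure ℝ} {t : ℝ}

lemma continuous_Gp [IsFiniteMeasure μ] [NeZero μ] (ht : 0 < t) : Continuous (Gp μ t) := by
  have hN := continuous_integral_pow_mul_gker (μ := μ) ht 1
  have hF := continuous_integral_pow_mul_gker (μ := μ) ht 0
  simp only [pow_one, pow_zero, one_mul] at hN hF
  exact hN.div hF fun y => (Fw_pos ht y).ne'

lemma strictMono_Gp [IsFiniteMeasure μ] [NeZero μ] (ht : 0 < t)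
    (hμ : (μ.prod μ) {p : ℝ × ℝ | p.1 ≠ p.2} ≠ 0) : StrictMono (Gp μ t) := by
  intro y z hyz
  obtain ⟨δ, hδ, rfl⟩ : ∃ δ, 0 < δ ∧ z = y + δ := ⟨z - y, sub_pos.2 hyz, by ring⟩
  have key := integral_mul_integral_lt_of_strictMono (μ := μ) (f := id)
    (g := fun u => exp (u * δ)) (w := gker t y) strictMono_id
    (exp_strictMono.comp (strictMono_mul_right_of_pos hδ)) (gker_pos t y)
    (integrable_gker ht y) (integrable_mul_gker ht y)
    (by simpa only [← gker_add] using integrable_gker (μ := μ) ht (y + δ))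
    (by simpa only [id, mul_assoc, ← gker_add] using integrable_mul_gker (μ := μ) ht (y + δ))
    hμ
  simp only [id, mul_assoc, ← gker_add] at key
  rw [Gp, Gp, div_lt_div_iff₀ (Fw_pos ht _) (Fw_pos ht _), Fw, Fw]
  linarith

lemma Gp_mem_Imu [IsFiniteMeasure μ] (ht : 0 < t) {a b : ℝ} (ha : a ∈ msupport μ)
    (hb : b ∈ msupport μ) (hab : a ≠ b) (y : ℝ) : Gp μ t y ∈ Imu μ :=
  integral_mul_div_integral_mem_Imu (gker_pos t y) (integrable_gker ht y)
    (integrable_mul_gker ht y) ha hb hab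

lemma Gp_map_neg (μ : Measure ℝ) (t y : ℝ) : Gp (μ.map Neg.neg) t y = -Gp μ t (-y) := by
  have hF : Continuous (gker t y) := by unfold gker; fun_prop
  have hN : Continuous fun u => u * gker t y u := continuous_id.mul hF
  rw [Gp, Gp, Fw, Fw, integral_map measurable_neg.aemeasurable hF.aestronglyMeasurable,
    integral_map measurable_neg.aemeasurable hN.aestronglyMeasurable]
  simp only [gker_neg, neg_mul, integral_neg, neg_div]

lemma exists_integral_sub_mul_gker_pos [IsFiniteMeasure μ] (ht : 0 < t) {c q : ℝ}
    (hq : q ∈ msupport μ) (hcq : c < q) : ∃ y, 0 < ∫ u, (u - c) * gker t y u ∂μ := by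
  obtain ⟨a, hca, haq⟩ := exists_between hcq
  set J := Ioo a (q + 1)
  set K := (a ^ 2 + (q + 1) ^ 2) * t / 2
  have hJ : 0 < μ.real J :=
    ENNReal.toReal_pos (hq J (Ioo_mem_nhds haq (by linarith))) (measure_ne_top μ J)
  have hβ : 0 < (a - c) * exp (-K) := mul_pos (sub_pos.2 hca) (exp_pos _)
  -- For `y ≥ 1` the integrand is at least `-e^{cy}` everywhere and of order `e^{ay}` on `J`.
  obtain ⟨y, hy1, hy⟩ : ∃ y, 1 ≤ y ∧
      μ.real univ / ((a - c) * exp (-K) * μ.real J) < exp ((a - c) * y) :=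
    ((eventually_ge_atTop 1).and ((tendsto_exp_atTop.comp
      (tendsto_id.const_mul_atTop (sub_pos.2 hca))).eventually_gt_atTop _)).exists
  refine ⟨y, ?_⟩
  set L : ℝ → ℝ := fun u => J.indicator (fun _ => (a - c) * exp (a * y - K)) u - exp (c * y)
  have hL : ∀ u, L u ≤ (u - c) * gker t y u := by
    intro u
    by_cases hu : u ∈ J
    · simp only [L, indicator_of_mem hu]
      have : (a - c) * exp (a * y - K) ≤ (u - c) * gker t y u :=
        le_sub_mul_gker_of_mem_Ioo ht.le (zero_le_one.trans hy1) hca.le hu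
      linarith [exp_pos (c * y)]
    · simp only [L, indicator_of_notMem hu, zero_sub]
      exact neg_exp_le_sub_mul_gker ht.le hy1 c u
  have hJi : Integrable (J.indicator fun _ => (a - c) * exp (a * y - K)) μ :=
    (integrable_const _).indicator measurableSet_Ioo
  have hi : Integrable (fun u => (u - c) * gker t y u) μ := by
    simp only [sub_mul]
    exact (integrable_mul_gker ht y).sub ((integrable_gker ht y).const_mul c)
  rw [div_lt_iff₀ (mul_pos hβ hJ)] at hy
  have hexp : exp (a * y - K) = exp ((a - c) * y) * exp (-K) * exp (c * y) := by
    rw [← exp_add, ← exp_add]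
    ring_nf
  calc 0 < (a - c) * exp (a * y - K) * μ.real J - exp (c * y) * μ.real univ := by
        rw [hexp]
        linarith [mul_lt_mul_of_pos_right hy (exp_pos (c * y))]
    _ = ∫ u, L u ∂μ := by
        rw [integral_sub hJi (integrable_const _), integral_indicator_const _ measurableSet_Ioo,
          integral_const, smul_eq_mul, smul_eq_mul]
        ring
    _ ≤ ∫ u, (u - c) * gker t y u ∂μ := integral_mono (hJi.sub (integrable_const _)) hi hL

lemma exists_lt_Gp [IsFiniteMeasure μ] (ht : 0 < t) {c q : ℝ} (hq : q ∈ msupport μ)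
    (hcq : c < q) : ∃ y, c < Gp μ t y := by
  have : NeZero μ := ⟨Measure.nonempty_support_iff.1 ⟨q, msupport_eq_support μ ▸ hq⟩⟩
  obtain ⟨y, hy⟩ := exists_integral_sub_mul_gker_pos ht hq hcq
  simp only [sub_mul] at hy
  rw [integral_sub (integrable_mul_gker ht y) ((integrable_gker ht y).const_mul c),
    integral_const_mul] at hy
  refine ⟨y, ?_⟩
  rw [Gp, lt_div_iff₀ (Fw_pos ht y), Fw]
  linarith

lemma exists_Gp_lt [IsFiniteMeasure μ] (ht : 0 < t) {c p : ℝ} (hp : p ∈ msupport μ)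
    (hpc : p < c) : ∃ y, Gp μ t y < c := by
  obtain ⟨y, hy⟩ := exists_lt_Gp ht (neg_mem_msupport_map_neg hp) (neg_lt_neg hpc)
  rw [Gp_map_neg] at hy
  exact ⟨-y, by linarith⟩

end PosteriorMean

theorem posterior_mean_bijection_general
    (μ : Measure ℝ) [IsProbabilityMeasure μ]
    (htwo : ∃ a b : ℝ, a ∈ msupport μ ∧ b ∈ msupport μ ∧ a ≠ b)
    (t : ℝ) (ht : 0 < t) :
    StrictMono (Gp μ t) ∧ Continuous (Gp μ t) ∧
      Set.BijOn (Gp μ t) Set.univ (Imu μ) := by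
  obtain ⟨a, b, ha, hb, hab⟩ := htwo
  have hmono := strictMono_Gp ht (measure_prod_setOf_ne_ne_zero ha hb hab)
  have hcont := continuous_Gp (μ := μ) ht
  refine ⟨hmono, hcont, fun y _ => Gp_mem_Imu ht ha hb hab y, hmono.injective.injOn,
    fun x hx => ?_⟩
  rw [Imu, mem_interior_convexHull_iff] at hx
  obtain ⟨⟨p, hp, hpx⟩, q, hq, hxq⟩ := hx
  obtain ⟨y₁, hy₁⟩ := exists_Gp_lt ht hp hpx
  obtain ⟨y₂, hy₂⟩ := exists_lt_Gp ht hq hxq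
  obtain ⟨y, hy⟩ := intermediate_value_univ y₁ y₂ hcont ⟨hy₁.le, hy₂.le⟩
  exact ⟨y, mem_univ y, hy⟩

/-- Remark 2.2, Bijections: if the support of `μ` contains at least two
points, then for each `t > 0` the posterior mean `y ↦ G(t,y)` is a strictly increasing
continuous bijection from `ℝ` onto `I_μ`. -/
theorem posterior_mean_bijection
    (μ : Measure ℝ) [IsProbabilityMeasure μ] (hμ2 : Integrable (fun u => u ^ 2) μ)
    (htwo : ∃ a b : ℝ, a ∈ msupport μ ∧ b ∈ msupport μ ∧ a ≠ b)
    (t : ℝ) (ht : 0 < t) :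
    StrictMono (Gp μ t) ∧ Continuous (Gp μ t) ∧
      Set.BijOn (Gp μ t) Set.univ (Imu μ) :=
  posterior_mean_bijection_general μ htwo t ht
end
end

section
/- Let μ be a probability measure on ℝ and define its Widder transform F(t,y) = ∫_ℝ exp(uy − u²t/2) μ(du) for (t,y) ∈ (0,∞) × ℝ. Then F is finite and smooth on (0,∞) × ℝ and solves the backward heat equation ∂_t F(t,y) + (1/2) ∂²_{yy} F(t,y) = 0 there. -/
open MeasureTheory ProbabilityTheory Real Filter Set
open scoped ENNReal NNReal

noncomputable section

namespace WidderAux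

/-- The linear part of the exponent, as a continuous linear map on `ℝ × ℝ`. -/
def lk (u : ℝ) : ℝ × ℝ →L[ℝ] ℝ :=
  u • (ContinuousLinearMap.snd ℝ ℝ ℝ) + (-(u ^ 2) / 2) • (ContinuousLinearMap.fst ℝ ℝ ℝ)

lemma lk_apply (u : ℝ) (q : ℝ × ℝ) : lk u q = u * q.2 - u ^ 2 * q.1 / 2 := by
  simp [lk]; ring

lemma continuous_lk : Continuous lk :=
  (continuous_id.smul continuous_const).add
    ((by fun_prop : Continuous fun u : ℝ => -(u ^ 2) / 2).smul continuous_const)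

lemma norm_lk_le (u : ℝ) : ‖lk u‖ ≤ |u| + u ^ 2 / 2 := by
  refine ContinuousLinearMap.opNorm_le_bound _ (by positivity) fun q => ?_
  rw [lk_apply, Real.norm_eq_abs]
  have h1 : |q.1| ≤ ‖q‖ := by rw [← Real.norm_eq_abs]; exact norm_fst_le q
  have h2 : |q.2| ≤ ‖q‖ := by rw [← Real.norm_eq_abs]; exact norm_snd_le q
  have h0 : (0:ℝ) ≤ ‖q‖ := norm_nonneg q
  calc |u * q.2 - u ^ 2 * q.1 / 2| ≤ |u * q.2| + |u ^ 2 * q.1 / 2| := abs_sub _ _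
    _ = |u| * |q.2| + u ^ 2 / 2 * |q.1| := by
        rw [abs_mul, abs_div, abs_mul, abs_pow, abs_two, sq_abs]; ring
    _ ≤ |u| * ‖q‖ + u ^ 2 / 2 * ‖q‖ := by
        have := abs_nonneg u
        gcongr
    _ = (|u| + u ^ 2 / 2) * ‖q‖ := by ring

/-- Weighted kernel `u ^ k * gker`. -/
def wk (k : ℕ) (p : ℝ × ℝ) (u : ℝ) : ℝ := u ^ k * gker p.1 p.2 u

lemma continuous_wk (k : ℕ) (p : ℝ × ℝ) : Continuous (wk k p) := by
  unfold wk gker; fun_prop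

/-- Key moment bound. -/
lemma key_bound (k : ℕ) {a : ℝ} (ha : 0 < a) {R : ℝ} (hR : 0 ≤ R) (u : ℝ) :
    |u| ^ k * Real.exp (|u| * R - u ^ 2 * a / 2) ≤
      k.factorial * Real.exp ((R + 1) ^ 2 / (2 * a)) := by
  have hf : (0:ℝ) < k.factorial := by exact_mod_cast k.factorial_pos
  have h1 : |u| ^ k ≤ k.factorial * Real.exp |u| := by
    have h := Real.pow_div_factorial_le_exp |u| (abs_nonneg u) k
    calc |u| ^ k = (|u| ^ k / k.factorial) * k.factorial := by field_simp
      _ ≤ Real.exp |u| * k.factorial := by gcongr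
      _ = k.factorial * Real.exp |u| := by ring
  calc |u| ^ k * Real.exp (|u| * R - u ^ 2 * a / 2)
      ≤ (k.factorial * Real.exp |u|) * Real.exp (|u| * R - u ^ 2 * a / 2) := by
        gcongr
    _ = k.factorial * Real.exp (|u| * (R + 1) - u ^ 2 * a / 2) := by
        rw [mul_assoc, ← Real.exp_add]; ring_nf
    _ ≤ k.factorial * Real.exp ((R + 1) ^ 2 / (2 * a)) := by
        gcongr
        rw [← sub_nonneg]
        have key : 0 ≤ (a * |u| - (R + 1)) ^ 2 := sq_nonneg _
        have hu : |u| ^ 2 = u ^ 2 := sq_abs u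
        rw [div_sub' (by positivity : (2:ℝ) * a ≠ 0)]
        apply div_nonneg _ (by positivity)
        have key2 : 0 ≤ a ^ 2 * u ^ 2 - 2 * a * |u| * (R + 1) + (R + 1) ^ 2 := by
          nlinarith [sq_nonneg (a * |u| - (R + 1)), sq_abs u]
        nlinarith [key2]

end WidderAux

namespace WidderAux
open ContinuousMultilinearMap

/-- The constant dominating all series terms. -/
def Ck (k : ℕ) (t y : ℝ) : ℝ := k.factorial * Real.exp ((|y| + t / 2 + 1) ^ 2 / t)

lemma Ck_pos (k : ℕ) (t y : ℝ) : 0 < Ck k t y := by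
  unfold Ck; positivity

/-- The master term bound for the power series. -/
lemma term_bound (k n : ℕ) {t : ℝ} (y : ℝ) (ht : 0 < t) {r : ℝ} (hr0 : 0 ≤ r)
    (hr : r ≤ t / 4) (u : ℝ) :
    (n.factorial : ℝ)⁻¹ * (|u| ^ k * gker t y u) * (r * (|u| + u ^ 2 / 2)) ^ n ≤
      (2 : ℝ)⁻¹ ^ n * Ck k t y := by
  have hf : (0:ℝ) < n.factorial := by exact_mod_cast n.factorial_pos
  set D := |u| + u ^ 2 / 2 with hD
  have hD0 : 0 ≤ D := by positivity
  have step1 : (r * D) ^ n * (n.factorial : ℝ)⁻¹ ≤ (2:ℝ)⁻¹ ^ n * Real.exp (2 * (r * D)) := by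
    have h := Real.pow_div_factorial_le_exp (2 * (r * D)) (by positivity) n
    rw [mul_pow] at h
    calc (r * D) ^ n * (n.factorial : ℝ)⁻¹
        = (2:ℝ)⁻¹ ^ n * (2 ^ n * (r * D) ^ n / n.factorial) := by
          rw [inv_pow, div_eq_mul_inv]
          field_simp
      _ ≤ (2:ℝ)⁻¹ ^ n * Real.exp (2 * (r * D)) := by gcongr
  have step2 : gker t y u * Real.exp (2 * (r * D)) ≤
      Real.exp (|u| * (|y| + t / 2) - u ^ 2 * (t / 2) / 2) := by
    rw [gker, ← Real.exp_add, Real.exp_le_exp]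
    have huy : u * y ≤ |u| * |y| := by
      calc u * y ≤ |u * y| := le_abs_self _
        _ = |u| * |y| := abs_mul u y
    have hrD : 2 * (r * D) ≤ (t / 2) * D := by
      have : 2 * r ≤ t / 2 := by linarith
      calc 2 * (r * D) = (2 * r) * D := by ring
        _ ≤ (t / 2) * D := by gcongr
    calc u * y - u ^ 2 * t / 2 + 2 * (r * D)
        ≤ |u| * |y| - u ^ 2 * t / 2 + (t / 2) * D := by linarith
      _ = |u| * (|y| + t / 2) - u ^ 2 * (t / 2) / 2 := by rw [hD]; ring
  have step3 : |u| ^ k * Real.exp (|u| * (|y| + t / 2) - u ^ 2 * (t / 2) / 2) ≤ Ck k t y := by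
    have := key_bound k (a := t / 2) (by linarith) (R := |y| + t / 2)
      (by positivity) u
    unfold Ck
    calc |u| ^ k * Real.exp (|u| * (|y| + t / 2) - u ^ 2 * (t / 2) / 2)
        ≤ k.factorial * Real.exp ((|y| + t / 2 + 1) ^ 2 / (2 * (t / 2))) := this
      _ = k.factorial * Real.exp ((|y| + t / 2 + 1) ^ 2 / t) := by
          rw [show (2:ℝ) * (t / 2) = t by ring]
  have hg0 : 0 ≤ gker t y u := (Real.exp_pos _).le
  calc (n.factorial : ℝ)⁻¹ * (|u| ^ k * gker t y u) * (r * D) ^ n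
      = (|u| ^ k * gker t y u) * ((r * D) ^ n * (n.factorial : ℝ)⁻¹) := by ring
    _ ≤ (|u| ^ k * gker t y u) * ((2:ℝ)⁻¹ ^ n * Real.exp (2 * (r * D))) := by
        have : (0:ℝ) ≤ |u| ^ k * gker t y u := by positivity
        gcongr
    _ = (2:ℝ)⁻¹ ^ n * (|u| ^ k * (gker t y u * Real.exp (2 * (r * D)))) := by ring
    _ ≤ (2:ℝ)⁻¹ ^ n * (|u| ^ k * Real.exp (|u| * (|y| + t / 2) - u ^ 2 * (t / 2) / 2)) := by
        have : (0:ℝ) ≤ |u| ^ k := by positivity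
        gcongr
    _ ≤ (2:ℝ)⁻¹ ^ n * Ck k t y := by gcongr

end WidderAux

namespace WidderAux
open ContinuousMultilinearMap

/-- The `n`-linear map `(q₁,…,qₙ) ↦ ∏ᵢ lk u qᵢ`. -/
def cmm (n : ℕ) (u : ℝ) : ContinuousMultilinearMap ℝ (fun _ : Fin n => ℝ × ℝ) ℝ :=
  (ContinuousMultilinearMap.mkPiAlgebra ℝ (Fin n) ℝ).compContinuousLinearMap fun _ => lk u

lemma cmm_apply (n : ℕ) (u : ℝ) (q : ℝ × ℝ) : cmm n u (fun _ => q) = lk u q ^ n := by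
  simp [cmm, Finset.prod_const]

lemma continuous_cmm (n : ℕ) : Continuous (cmm n) := by
  have h : Continuous fun u : ℝ => (fun _ : Fin n => lk u) :=
    continuous_pi fun _ => continuous_lk
  exact ((ContinuousMultilinearMap.mkPiAlgebra ℝ (Fin n) ℝ).compContinuousLinearMapLRight.cont).comp h

lemma norm_cmm_le (n : ℕ) (u : ℝ) : ‖cmm n u‖ ≤ (|u| + u ^ 2 / 2) ^ n := by
  have h := ContinuousMultilinearMap.norm_compContinuousLinearMap_le
    (ContinuousMultilinearMap.mkPiAlgebra ℝ (Fin n) ℝ) (fun _ : Fin n => lk u)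
  rw [ContinuousMultilinearMap.norm_mkPiAlgebra, one_mul, Finset.prod_const] at h
  refine h.trans ?_
  simp only [Finset.card_univ, Fintype.card_fin]
  exact pow_le_pow_left₀ (norm_nonneg _) (norm_lk_le u) n

/-- Integrand of the `n`-th power series coefficient. -/
def intg (k n : ℕ) (p : ℝ × ℝ) (u : ℝ) : ContinuousMultilinearMap ℝ (fun _ : Fin n => ℝ × ℝ) ℝ :=
  ((n.factorial : ℝ)⁻¹ * wk k p u) • cmm n u

lemma norm_intg_le (k n : ℕ) {p : ℝ × ℝ} (hp : 0 < p.1) (u : ℝ) :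
    ‖intg k n p u‖ ≤ (4 / p.1) ^ n * ((2:ℝ)⁻¹ ^ n * Ck k p.1 p.2) := by
  have hf : (0:ℝ) < n.factorial := by exact_mod_cast n.factorial_pos
  have hg0 : 0 < gker p.1 p.2 u := Real.exp_pos _
  have h1 : ‖intg k n p u‖ ≤
      (n.factorial : ℝ)⁻¹ * (|u| ^ k * gker p.1 p.2 u) * (|u| + u ^ 2 / 2) ^ n := by
    refine le_trans (ContinuousMultilinearMap.opNorm_smul_le _ _) ?_
    rw [Real.norm_eq_abs, abs_mul, abs_inv, Nat.abs_cast, wk, abs_mul, abs_pow,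
      abs_of_pos hg0]
    exact mul_le_mul_of_nonneg_left (norm_cmm_le n u) (by positivity)
  refine h1.trans ?_
  have h2 : (n.factorial : ℝ)⁻¹ * (|u| ^ k * gker p.1 p.2 u) * (|u| + u ^ 2 / 2) ^ n
      = (4 / p.1) ^ n *
        ((n.factorial : ℝ)⁻¹ * (|u| ^ k * gker p.1 p.2 u) *
          (p.1 / 4 * (|u| + u ^ 2 / 2)) ^ n) := by
    rw [mul_pow (p.1 / 4)]
    have h3 : (4 / p.1) ^ n * (p.1 / 4) ^ n = 1 := by
      rw [← mul_pow]
      rw [show 4 / p.1 * (p.1 / 4) = 1 by field_simp]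
      exact one_pow n
    calc _ = ((4 / p.1) ^ n * (p.1 / 4) ^ n) *
          ((n.factorial : ℝ)⁻¹ * (|u| ^ k * gker p.1 p.2 u) * (|u| + u ^ 2 / 2) ^ n) := by
          rw [h3, one_mul]
      _ = _ := by ring
  rw [h2]
  exact mul_le_mul_of_nonneg_left
    (term_bound k n p.2 hp (by positivity) le_rfl u) (by positivity)

end WidderAux

namespace WidderAux

/-- The weighted Widder transform. -/
def Wk (μ : Measure ℝ) (k : ℕ) (p : ℝ × ℝ) : ℝ := ∫ u, wk k p u ∂μ

variable {μ : Measure ℝ} [IsProbabilityMeasure μ]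

lemma integrable_wk (k : ℕ) {p : ℝ × ℝ} (hp : 0 < p.1) : Integrable (wk k p) μ := by
  refine Integrable.mono' (integrable_const
      ((k.factorial : ℝ) * Real.exp ((|p.2| + 1) ^ 2 / (2 * p.1))))
    (continuous_wk k p).aestronglyMeasurable
    (Eventually.of_forall fun u => ?_)
  have hg0 : 0 < gker p.1 p.2 u := Real.exp_pos _
  rw [Real.norm_eq_abs, wk, abs_mul, abs_pow, abs_of_pos hg0]
  have h1 : gker p.1 p.2 u ≤ Real.exp (|u| * |p.2| - u ^ 2 * p.1 / 2) := by
    rw [gker, Real.exp_le_exp]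
    have : u * p.2 ≤ |u| * |p.2| := by
      calc u * p.2 ≤ |u * p.2| := le_abs_self _
        _ = |u| * |p.2| := abs_mul _ _
    linarith
  calc |u| ^ k * gker p.1 p.2 u ≤ |u| ^ k * Real.exp (|u| * |p.2| - u ^ 2 * p.1 / 2) := by
        have : (0:ℝ) ≤ |u| ^ k := by positivity
        exact mul_le_mul_of_nonneg_left h1 this
    _ ≤ k.factorial * Real.exp ((|p.2| + 1) ^ 2 / (2 * p.1)) :=
        key_bound k hp (abs_nonneg _) u

set_option synthInstance.maxHeartbeats 1000000 in
lemma integrable_intg (k n : ℕ) {p : ℝ × ℝ} (hp : 0 < p.1) : Integrable (intg k n p) μ := by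
  refine Integrable.mono' (integrable_const ((4 / p.1) ^ n * ((2:ℝ)⁻¹ ^ n * Ck k p.1 p.2)))
    ?_ (Eventually.of_forall fun u => norm_intg_le k n hp u)
  exact (((continuous_const.mul (continuous_wk k p)).smul (continuous_cmm n))).aestronglyMeasurable

/-- The candidate power series of `Wk μ k` centred at `p`. -/
def Pk (μ : Measure ℝ) (k : ℕ) (p : ℝ × ℝ) : FormalMultilinearSeries ℝ (ℝ × ℝ) ℝ :=
  fun n => ∫ u, intg k n p u ∂μ

lemma Pk_apply (k n : ℕ) {p : ℝ × ℝ} (hp : 0 < p.1) (q : ℝ × ℝ) :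
    (Pk μ k p n) (fun _ => q) = ∫ u, ((n.factorial : ℝ)⁻¹ * wk k p u) * lk u q ^ n ∂μ := by
  rw [Pk, ContinuousMultilinearMap.integral_apply (integrable_intg k n hp)]
  congr 1
  funext u
  rw [intg, ContinuousMultilinearMap.smul_apply, cmm_apply, smul_eq_mul]

lemma norm_Pk_le (k n : ℕ) {p : ℝ × ℝ} (hp : 0 < p.1) :
    ‖Pk μ k p n‖ ≤ (4 / p.1) ^ n * ((2:ℝ)⁻¹ ^ n * Ck k p.1 p.2) := by
  refine le_trans (norm_integral_le_integral_norm _) ?_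
  calc ∫ u, ‖intg k n p u‖ ∂μ
      ≤ ∫ _, (4 / p.1) ^ n * ((2:ℝ)⁻¹ ^ n * Ck k p.1 p.2) ∂μ := by
        refine integral_mono ((integrable_intg k n hp).norm) (integrable_const _) ?_
        exact fun u => norm_intg_le k n hp u
    _ = (4 / p.1) ^ n * ((2:ℝ)⁻¹ ^ n * Ck k p.1 p.2) := by
        rw [integral_const]; simp

end WidderAux

namespace WidderAux

variable {μ : Measure ℝ} [IsProbabilityMeasure μ]

lemma Fn_bound (k n : ℕ) {p : ℝ × ℝ} (hp : 0 < p.1) {q : ℝ × ℝ} (hq : ‖q‖ ≤ p.1 / 4) (u : ℝ) :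
    ‖((n.factorial : ℝ)⁻¹ * wk k p u) * lk u q ^ n‖ ≤ (2:ℝ)⁻¹ ^ n * Ck k p.1 p.2 := by
  have hg0 : 0 < gker p.1 p.2 u := Real.exp_pos _
  have hD0 : (0:ℝ) ≤ |u| + u ^ 2 / 2 := by positivity
  have hlq : |lk u q| ≤ ‖q‖ * (|u| + u ^ 2 / 2) := by
    calc |lk u q| = ‖lk u q‖ := (Real.norm_eq_abs _).symm
      _ ≤ ‖lk u‖ * ‖q‖ := ContinuousLinearMap.le_opNorm _ _
      _ ≤ (|u| + u ^ 2 / 2) * ‖q‖ := by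
          exact mul_le_mul_of_nonneg_right (norm_lk_le u) (norm_nonneg q)
      _ = ‖q‖ * (|u| + u ^ 2 / 2) := by ring
  rw [Real.norm_eq_abs, abs_mul, abs_mul, abs_inv, Nat.abs_cast, abs_pow]
  rw [wk, abs_mul, abs_pow, abs_of_pos hg0]
  calc (n.factorial : ℝ)⁻¹ * (|u| ^ k * gker p.1 p.2 u) * |lk u q| ^ n
      ≤ (n.factorial : ℝ)⁻¹ * (|u| ^ k * gker p.1 p.2 u) * (‖q‖ * (|u| + u ^ 2 / 2)) ^ n := by
        refine mul_le_mul_of_nonneg_left ?_ (by positivity)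
        exact pow_le_pow_left₀ (abs_nonneg _) hlq n
    _ ≤ (2:ℝ)⁻¹ ^ n * Ck k p.1 p.2 := term_bound k n p.2 hp (norm_nonneg q) hq u

theorem hasSeries (k : ℕ) {p : ℝ × ℝ} (hp : 0 < p.1) :
    HasFPowerSeriesOnBall (Wk μ k) (Pk μ k p) p (ENNReal.ofReal (p.1 / 4)) := by
  constructor
  · -- radius bound
    rw [show ENNReal.ofReal (p.1 / 4) = ((Real.toNNReal (p.1 / 4) : ℝ≥0) : ℝ≥0∞) from rfl]
    apply FormalMultilinearSeries.le_radius_of_bound _ (Ck k p.1 p.2)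
    intro n
    have hco : ((Real.toNNReal (p.1 / 4) : ℝ≥0) : ℝ) = p.1 / 4 :=
      Real.coe_toNNReal _ (by positivity)
    rw [hco]
    have h1 : (4 / p.1) ^ n * (p.1 / 4) ^ n = 1 := by
      rw [← mul_pow, show 4 / p.1 * (p.1 / 4) = 1 by field_simp]
      exact one_pow n
    calc ‖Pk μ k p n‖ * (p.1 / 4) ^ n
        ≤ (4 / p.1) ^ n * ((2:ℝ)⁻¹ ^ n * Ck k p.1 p.2) * (p.1 / 4) ^ n :=
          mul_le_mul_of_nonneg_right (norm_Pk_le k n hp) (by positivity)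
      _ = (4 / p.1) ^ n * (p.1 / 4) ^ n * ((2:ℝ)⁻¹ ^ n * Ck k p.1 p.2) := by ring
      _ = (2:ℝ)⁻¹ ^ n * Ck k p.1 p.2 := by rw [h1, one_mul]
      _ ≤ Ck k p.1 p.2 := by
          refine mul_le_of_le_one_left (Ck_pos k p.1 p.2).le ?_
          exact pow_le_one₀ (by norm_num) (by norm_num)
  · exact ENNReal.ofReal_pos.2 (by positivity)
  · intro q hq
    have hq' : ‖q‖ < p.1 / 4 := by
      rw [EMetric.mem_ball, edist_lt_ofReal, dist_zero_right] at hq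
      exact hq
    set Fn : ℕ → ℝ → ℝ := fun n u => ((n.factorial : ℝ)⁻¹ * wk k p u) * lk u q ^ n with hFn
    have hFn_int : ∀ n, Integrable (Fn n) μ := by
      intro n
      refine Integrable.mono' (integrable_const ((2:ℝ)⁻¹ ^ n * Ck k p.1 p.2)) ?_
        (Eventually.of_forall fun u => Fn_bound k n hp hq'.le u)
      have hlkc : Continuous fun u : ℝ => lk u q := by
        have he : (fun u : ℝ => lk u q) = fun u : ℝ => u * q.2 - u ^ 2 * q.1 / 2 :=
          funext fun u => lk_apply u q
        rw [he]; fun_prop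
      exact ((continuous_const.mul (continuous_wk k p)).mul (hlkc.pow n)).aestronglyMeasurable
    have hsum_int : Summable fun n => ∫ u, ‖Fn n u‖ ∂μ := by
      refine Summable.of_nonneg_of_le (fun n => integral_nonneg fun u => norm_nonneg _)
        (fun n => ?_) (((summable_geometric_of_lt_one (r := (2:ℝ)⁻¹) (by norm_num)
          (by norm_num)).mul_right (Ck k p.1 p.2)))
      calc ∫ u, ‖Fn n u‖ ∂μ ≤ ∫ _, (2:ℝ)⁻¹ ^ n * Ck k p.1 p.2 ∂μ :=
            integral_mono (hFn_int n).norm (integrable_const _)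
              (fun u => Fn_bound k n hp hq'.le u)
        _ = (2:ℝ)⁻¹ ^ n * Ck k p.1 p.2 := by rw [integral_const]; simp
    have key := hasSum_integral_of_summable_integral_norm hFn_int hsum_int
    have h1 : ∀ u, ∑' n, Fn n u = wk k (p + q) u := by
      intro u
      have hs : HasSum (fun n => lk u q ^ n / n.factorial) (Real.exp (lk u q)) := by
        rw [Real.exp_eq_exp_ℝ]
        exact NormedSpace.expSeries_div_hasSum_exp (lk u q)
      have hs2 : HasSum (fun n => Fn n u) (Real.exp (lk u q) * wk k p u) := by
        have := hs.mul_right (wk k p u)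
        refine this.congr_fun fun n => ?_
        simp only [hFn, div_eq_mul_inv]
        ring
      rw [hs2.tsum_eq, wk, wk, gker, gker, lk_apply, Prod.fst_add, Prod.snd_add,
        mul_comm (Real.exp _), mul_assoc, ← Real.exp_add]
      congr 2
      ring
    have e1 : (fun n => (Pk μ k p n) fun _ => q) = fun n => ∫ u, Fn n u ∂μ :=
      funext fun n => Pk_apply k n hp q
    have e2 : Wk μ k (p + q) = ∫ u, ∑' n, Fn n u ∂μ := by
      rw [Wk]
      exact integral_congr_ae (Eventually.of_forall fun u => (h1 u).symm)
    rw [e1, e2]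
    exact key

end WidderAux

namespace WidderAux

variable {μ : Measure ℝ} [IsProbabilityMeasure μ]

lemma analyticOnNhd (k : ℕ) :
    AnalyticOnNhd ℝ (Wk μ k) (Set.Ioi (0:ℝ) ×ˢ (Set.univ : Set ℝ)) := fun p hp =>
  ⟨Pk μ k p, (hasSeries (μ := μ) k (Set.mem_Ioi.mp hp.1)).hasFPowerSeriesAt⟩

lemma curry1 (k : ℕ) {p : ℝ × ℝ} (hp : 0 < p.1) (v : ℝ × ℝ) :
    continuousMultilinearCurryFin1 ℝ (ℝ × ℝ) ℝ (Pk μ k p 1) v =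
      Wk μ (k+1) p * v.2 - Wk μ (k+2) p * v.1 / 2 := by
  rw [continuousMultilinearCurryFin1_apply]
  have hsnoc : (Fin.snoc 0 v : Fin 1 → ℝ × ℝ) = fun _ => v := by
    funext i
    fin_cases i
    simp [Fin.snoc]
  rw [hsnoc, Pk_apply k 1 hp v]
  have e : ∫ u, ((Nat.factorial 1 : ℝ))⁻¹ * wk k p u * lk u v ^ 1 ∂μ
      = ∫ u, (v.2 * wk (k+1) p u - v.1 / 2 * wk (k+2) p u) ∂μ := by
    refine integral_congr_ae (Eventually.of_forall fun u => ?_)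
    simp only [Nat.factorial_one, pow_one, lk_apply, wk]
    push_cast
    ring
  rw [e, integral_sub ((integrable_wk (k+1) hp).const_mul _)
    ((integrable_wk (k+2) hp).const_mul _), integral_const_mul, integral_const_mul]
  rw [Wk, Wk]
  ring

lemma hasDerivAt_fst (k : ℕ) {t : ℝ} (ht : 0 < t) (y : ℝ) :
    HasDerivAt (fun s => Wk μ k (s, y)) (-(Wk μ (k+2) (t, y)) / 2) t := by
  have h1 : HasDerivAt (fun s : ℝ => ((s, y) : ℝ × ℝ)) ((1:ℝ), (0:ℝ)) t :=
    (hasDerivAt_id t).prodMk (hasDerivAt_const t y)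
  have h2 := (hasSeries (μ := μ) k (p := (t, y)) ht).hasFPowerSeriesAt.hasFDerivAt
  have h3 := h2.comp_hasDerivAt t h1
  have h4 : continuousMultilinearCurryFin1 ℝ (ℝ × ℝ) ℝ (Pk μ k (t, y) 1) ((1:ℝ), (0:ℝ))
      = -(Wk μ (k+2) (t, y)) / 2 := by
    rw [curry1 k ht]
    norm_num [neg_div]
  rw [h4] at h3
  exact h3

lemma hasDerivAt_snd (k : ℕ) {t : ℝ} (ht : 0 < t) (z : ℝ) :
    HasDerivAt (fun w => Wk μ k (t, w)) (Wk μ (k+1) (t, z)) z := by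
  have h1 : HasDerivAt (fun w : ℝ => ((t, w) : ℝ × ℝ)) ((0:ℝ), (1:ℝ)) z :=
    (hasDerivAt_const z t).prodMk (hasDerivAt_id z)
  have h2 := (hasSeries (μ := μ) k (p := (t, z)) ht).hasFPowerSeriesAt.hasFDerivAt
  have h3 := h2.comp_hasDerivAt z h1
  have h4 : continuousMultilinearCurryFin1 ℝ (ℝ × ℝ) ℝ (Pk μ k (t, z) 1) ((0:ℝ), (1:ℝ))
      = Wk μ (k+1) (t, z) := by
    rw [curry1 k ht]
    norm_num
  rw [h4] at h3
  exact h3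

end WidderAux

/-- Remark 2.3, the Widder transform: for a probability measure `μ` on `ℝ`,
the Widder transform `F(t,y) = ∫ exp(uy - u²t/2) μ(du)` is finite and smooth on
`(0,∞) × ℝ`, and solves the backward heat equation `∂_t F + (1/2) ∂²_{yy} F = 0` there. -/
theorem widder_transform_backward_heat
    (μ : Measure ℝ) [IsProbabilityMeasure μ] :
    (∀ t : ℝ, 0 < t → ∀ y : ℝ, Integrable (gker t y) μ) ∧
      ContDiffOn ℝ (⊤ : ℕ∞) (fun p : ℝ × ℝ => Fw μ p.1 p.2) (Set.Ioi (0 : ℝ) ×ˢ Set.univ) ∧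
      ∀ t : ℝ, 0 < t → ∀ y : ℝ,
        deriv (fun s => Fw μ s y) t + (1 / 2) * iteratedDeriv 2 (fun z => Fw μ t z) y = 0 := by
  have hWk0 : (fun p : ℝ × ℝ => Fw μ p.1 p.2) = WidderAux.Wk μ 0 := by
    funext p
    simp [Fw, WidderAux.Wk, WidderAux.wk]
  refine ⟨fun t ht y => ?_, ?_, fun t ht y => ?_⟩
  · have h := WidderAux.integrable_wk (μ := μ) 0 (p := (t, y)) ht
    have he : WidderAux.wk 0 (t, y) = gker t y := funext fun u => by
      simp [WidderAux.wk]
    rwa [he] at h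
  · rw [hWk0]
    exact (WidderAux.analyticOnNhd (μ := μ) 0).contDiffOn_of_completeSpace
  · have e1 : (fun s => Fw μ s y) = fun s => WidderAux.Wk μ 0 (s, y) := by
      funext s; simp [Fw, WidderAux.Wk, WidderAux.wk]
    have e2 : (fun z => Fw μ t z) = fun z => WidderAux.Wk μ 0 (t, z) := by
      funext z; simp [Fw, WidderAux.Wk, WidderAux.wk]
    have e3 : deriv (fun z => WidderAux.Wk μ 0 (t, z)) = fun z => WidderAux.Wk μ 1 (t, z) :=
      funext fun z => (WidderAux.hasDerivAt_snd 0 ht z).deriv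
    rw [e1, e2, (WidderAux.hasDerivAt_fst 0 ht y).deriv, iteratedDeriv_succ, iteratedDeriv_one,
      e3, (WidderAux.hasDerivAt_snd 1 ht y).deriv]
    ring
end
end

section
/- Fix constants β > 0 and c > 0 with β⁴ > c, set γ := √(β² − √c) and ψ(x) := β² − x². Then there exists a unique number a ∈ (γ, β) satisfying ∫₀^a dξ/ψ(ξ)² = a/c. Moreover, the function Q(x) := ∫₀^x (c − ψ(ξ)²)/ψ(ξ)² dξ on (0, β) satisfies Q(0+) = 0, is strictly decreasing on (0, γ), is strictly increasing on (γ, β) with Q(x) → ∞ as x → β⁻, and a is its unique zero in (0, β). -/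
/-!
On `(-β, β)` we have `ψ > 0`, so `Q` is differentiable there with `Q' = (c - ψ²)/ψ²`. Since `ψ`
decreases on `[0, β)` and `ψ(γ)² = c`, this derivative is negative on `(0, γ)` and positive on
`(γ, β)`. Near `β` the bound `ψ(ξ) ≤ 2β(β - ξ)` gives `Q(x) ≥ c/(4β²)·((β - x)⁻¹ - β⁻¹) - x → ∞`.
As `Q(0) = 0 > Q(γ)`, the intermediate value theorem yields a zero `a ∈ (γ, β)`, which is the only
zero in `(0, β)` by monotonicity; finally `Q(x) = c ∫₀ˣ ψ⁻² - x` turns `Q(a) = 0` into the integral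
equation for `a`.
-/

open Real Set Filter MeasureTheory intervalIntegral

noncomputable section

/-- `ψ(x) = β² - x²`, the dispersion function for the symmetric Bernoulli prior. -/
def psiB (β x : ℝ) : ℝ := β ^ 2 - x ^ 2

/-- `Q(x) = ∫₀ˣ (c - ψ(ξ)²)/ψ(ξ)² dξ`. -/
def Qfun (β c x : ℝ) : ℝ := ∫ ξ in (0 : ℝ)..x, (c - psiB β ξ ^ 2) / psiB β ξ ^ 2

open Topology

theorem hasDerivAt_integral_of_continuousOn {f : ℝ → ℝ} {s : Set ℝ} {a x : ℝ}
    (hs : IsOpen s) (hs' : s.OrdConnected) (hf : ContinuousOn f s) (ha : a ∈ s) (hx : x ∈ s) :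
    HasDerivAt (fun u => ∫ t in a..u, f t) (f x) x :=
  integral_hasDerivAt_right (hf.mono (hs'.uIcc_subset ha hx)).intervalIntegrable
    (hf.stronglyMeasurableAtFilter hs x hx) (hf.continuousAt (hs.mem_nhds hx))

theorem integral_inv_sub_sq {β a b : ℝ} (ha : a < β) (hb : b < β) :
    ∫ ξ in a..b, ((β - ξ) ^ 2)⁻¹ = (β - b)⁻¹ - (β - a)⁻¹ := by
  refine integral_eq_sub_of_hasDerivAt (f := fun ξ => (β - ξ)⁻¹) (fun ξ hξ => ?_)
    (ContinuousOn.intervalIntegrable (u := fun ξ => ((β - ξ) ^ 2)⁻¹) ?_)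
  · have hξ : β - ξ ≠ 0 := sub_ne_zero.mpr (max_lt ha hb |>.trans_le' hξ.2).ne'
    simpa only [neg_neg, one_div] using ((hasDerivAt_id' ξ).const_sub β).fun_inv hξ
  · exact ContinuousOn.inv₀ (by fun_prop) fun ξ hξ =>
      pow_ne_zero 2 (sub_ne_zero.mpr (max_lt ha hb |>.trans_le' hξ.2).ne')

section Bernoulli

variable {β c γ x : ℝ}

theorem psiB_pos (hx : x ∈ Ioo (-β) β) : 0 < psiB β x := by
  have := hx.1; have := hx.2
  unfold psiB; nlinarith

theorem psiB_strictAntiOn (β : ℝ) : StrictAntiOn (psiB β) (Ici 0) := fun x hx y _ hxy => by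
  have : x ^ 2 < y ^ 2 := pow_lt_pow_left₀ hxy hx two_ne_zero
  unfold psiB; linarith

theorem psiB_le (β x : ℝ) : psiB β x ≤ 2 * β * (β - x) := by
  unfold psiB; nlinarith [sq_nonneg (β - x)]

theorem continuousOn_div_psiB_sq {f : ℝ → ℝ} (hf : Continuous f) :
    ContinuousOn (fun ξ => f ξ / psiB β ξ ^ 2) (Ioo (-β) β) :=
  hf.continuousOn.div (by unfold psiB; fun_prop) fun _ hξ => (pow_pos (psiB_pos hξ) 2).ne'

theorem hasDerivAt_Qfun (hx : x ∈ Ioo (-β) β) :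
    HasDerivAt (Qfun β c) ((c - psiB β x ^ 2) / psiB β x ^ 2) x :=
  hasDerivAt_integral_of_continuousOn isOpen_Ioo ordConnected_Ioo
    (continuousOn_div_psiB_sq (by unfold psiB; fun_prop))
    ⟨by linarith [hx.1, hx.2], by linarith [hx.1, hx.2]⟩ hx

theorem Qfun_eq (hx : x ∈ Ioo (-β) β) :
    Qfun β c x = c * (∫ ξ in (0 : ℝ)..x, 1 / psiB β ξ ^ 2) - x := by
  have hsub : uIcc 0 x ⊆ Ioo (-β) β :=
    ordConnected_Ioo.uIcc_subset ⟨by linarith [hx.1, hx.2], by linarith [hx.1, hx.2]⟩ hx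
  have hint : IntervalIntegrable (fun ξ => 1 / psiB β ξ ^ 2) volume 0 x :=
    ((continuousOn_div_psiB_sq continuous_const).mono hsub).intervalIntegrable
  calc Qfun β c x = ∫ ξ in (0 : ℝ)..x, (c * (1 / psiB β ξ ^ 2) - 1) :=
        integral_congr fun ξ hξ => by
          have := (pow_pos (psiB_pos (hsub hξ)) 2).ne'
          rw [sub_div, div_self this, mul_one_div]
    _ = _ := by
      rw [integral_sub (hint.const_mul c) intervalIntegrable_const,
        intervalIntegral.integral_const_mul]
      simp

theorem Qfun_eq_zero_iff (hc : c ≠ 0) (hx : x ∈ Ioo (-β) β) :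
    Qfun β c x = 0 ↔ (∫ ξ in (0 : ℝ)..x, 1 / psiB β ξ ^ 2) = x / c := by
  rw [Qfun_eq hx, sub_eq_zero, eq_div_iff hc, mul_comm]

theorem le_integral_one_div_psiB_sq (hx : x ∈ Ico 0 β) :
    (4 * β ^ 2)⁻¹ * ((β - x)⁻¹ - β⁻¹) ≤ ∫ ξ in (0 : ℝ)..x, 1 / psiB β ξ ^ 2 := by
  have hβ : 0 < β := hx.1.trans_lt hx.2
  have hsub : Icc 0 x ⊆ Ioo (-β) β := fun ξ hξ => ⟨by linarith [hξ.1], hξ.2.trans_lt hx.2⟩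
  have h := integral_inv_sub_sq hβ hx.2
  rw [sub_zero] at h
  rw [← h, ← intervalIntegral.integral_const_mul]
  refine integral_mono_on hx.1 (ContinuousOn.intervalIntegrable ?_)
    ((continuousOn_div_psiB_sq continuous_const).mono (uIcc_of_le hx.1 ▸ hsub)).intervalIntegrable
    fun ξ hξ => ?_
  · exact continuousOn_const.mul <| ContinuousOn.inv₀ (by fun_prop) fun ξ hξ =>
      pow_ne_zero 2 (sub_pos.mpr ((uIcc_of_le hx.1 ▸ hξ).2.trans_lt hx.2)).ne'
  · have hψ := psiB_pos (hsub hξ)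
    calc (4 * β ^ 2)⁻¹ * ((β - ξ) ^ 2)⁻¹ = 1 / (2 * β * (β - ξ)) ^ 2 := by
          rw [one_div, ← mul_inv]; ring_nf
      _ ≤ 1 / psiB β ξ ^ 2 := one_div_le_one_div_of_le (by positivity)
          (pow_le_pow_left₀ hψ.le (psiB_le β ξ) 2)

theorem tendsto_Qfun_atTop (hβ : 0 < β) (hc : 0 < c) :
    Tendsto (Qfun β c) (𝓝[<] β) atTop := by
  have hinv : Tendsto (fun x => (β - x)⁻¹) (𝓝[<] β) atTop :=
    tendsto_inv_nhdsGT_zero.comp (sub_self β ▸ (map_subLeft_nhdsLT (c := β) (a := β)).le)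
  have hc' : 0 < c * (4 * β ^ 2)⁻¹ := by positivity
  refine tendsto_atTop_mono' _ ?_ (tendsto_atTop_add_const_right _
    (-(c * (4 * β ^ 2)⁻¹ * β⁻¹ + β)) (hinv.const_mul_atTop hc'))
  filter_upwards [Ioo_mem_nhdsLT hβ] with x hx
  rw [Qfun_eq ⟨by linarith [hx.1], hx.2⟩]
  nlinarith [le_integral_one_div_psiB_sq ⟨hx.1.le, hx.2⟩, hx.2]

@[simp]
theorem Qfun_zero (β c : ℝ) : Qfun β c 0 = 0 :=
  integral_same

theorem continuousOn_Qfun : ContinuousOn (Qfun β c) (Ioo (-β) β) :=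
  fun _ hx => (hasDerivAt_Qfun hx).continuousAt.continuousWithinAt

theorem strictAntiOn_Qfun (hγβ : γ < β) (hγ : psiB β γ ^ 2 = c) :
    StrictAntiOn (Qfun β c) (Icc 0 γ) := by
  refine strictAntiOn_of_deriv_neg (convex_Icc 0 γ)
    (continuousOn_Qfun.mono fun x hx => ⟨by linarith [hx.1, hx.2], hx.2.trans_lt hγβ⟩)
    fun x hx => ?_
  rw [interior_Icc] at hx
  have hx' : x ∈ Ioo (-β) β := ⟨by linarith [hx.1, hx.2], hx.2.trans hγβ⟩
  have hψγ : 0 < psiB β γ := psiB_pos ⟨by linarith [hx.1, hx.2], hγβ⟩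
  have hψ : psiB β γ < psiB β x := psiB_strictAntiOn β hx.1.le (hx.1.trans hx.2).le hx.2
  rw [(hasDerivAt_Qfun hx').deriv]
  exact div_neg_of_neg_of_pos (by nlinarith) (pow_pos (psiB_pos hx') 2)

theorem strictMonoOn_Qfun (hγ0 : 0 ≤ γ) (hγ : psiB β γ ^ 2 = c) :
    StrictMonoOn (Qfun β c) (Ico γ β) := by
  refine strictMonoOn_of_deriv_pos (convex_Ico γ β)
    (continuousOn_Qfun.mono fun x hx => ⟨by linarith [hx.1, hx.2], hx.2⟩) fun x hx => ?_
  rw [interior_Ico] at hx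
  have hx' : x ∈ Ioo (-β) β := ⟨by linarith [hx.1, hx.2], hx.2⟩
  have hψ : psiB β x < psiB β γ := psiB_strictAntiOn β hγ0 (hγ0.trans hx.1.le) hx.1
  rw [(hasDerivAt_Qfun hx').deriv]
  exact div_pos (by nlinarith [psiB_pos hx']) (pow_pos (psiB_pos hx') 2)

theorem exists_mem_Ioo_Qfun_eq_zero (hc : 0 < c) (hγ0 : 0 < γ) (hγβ : γ < β)
    (hγ : psiB β γ ^ 2 = c) : ∃ a ∈ Ioo γ β, Qfun β c a = 0 := by
  have hQγ : Qfun β c γ < 0 :=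
    Qfun_zero β c ▸ strictAntiOn_Qfun hγβ hγ ⟨le_rfl, hγ0.le⟩ ⟨hγ0.le, le_rfl⟩ hγ0
  obtain ⟨b, hQb, hb⟩ := (((tendsto_Qfun_atTop (hγ0.trans hγβ) hc).eventually_gt_atTop 0).and
    (Ioo_mem_nhdsLT hγβ)).exists
  obtain ⟨a, ha, hQa⟩ := intermediate_value_Ioo hb.1.le
    (continuousOn_Qfun.mono fun x hx => ⟨by linarith [hx.1], hx.2.trans_lt hb.2⟩) ⟨hQγ, hQb⟩
  exact ⟨a, ⟨ha.1, ha.2.trans hb.2⟩, hQa⟩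

theorem eq_of_Qfun_eq_zero (hγ0 : 0 ≤ γ) (hγβ : γ < β) (hγ : psiB β γ ^ 2 = c) {a : ℝ}
    (ha : a ∈ Ioo γ β) (hQa : Qfun β c a = 0) (hx : x ∈ Ioo 0 β) (hQx : Qfun β c x = 0) :
    x = a := by
  rcases le_or_gt x γ with hxγ | hγx
  · have := strictAntiOn_Qfun hγβ hγ ⟨le_rfl, hγ0⟩ ⟨hx.1.le, hxγ⟩ hx.1
    rw [hQx, Qfun_zero] at this
    exact (lt_irrefl 0 this).elim
  · exact (strictMonoOn_Qfun hγ0 hγ).injOn ⟨hγx.le, hx.2⟩ ⟨ha.1.le, ha.2⟩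
      (hQx.trans hQa.symm)

theorem sqrt_sq_sub_sqrt_mem_Ioo (hβ : 0 < β) (hc : 0 < c) (hcb : c < β ^ 4) :
    √(β ^ 2 - √c) ∈ Ioo 0 β := by
  have hsc : √c < β ^ 2 := (Real.sqrt_lt' (by positivity)).mpr (by linarith)
  exact ⟨Real.sqrt_pos.mpr (by linarith),
    (Real.sqrt_lt' hβ).mpr (by linarith [Real.sqrt_pos.mpr hc])⟩

theorem psiB_sqrt_sq_sub_sqrt_sq (hc : 0 ≤ c) (hcb : c ≤ β ^ 4) :
    psiB β √(β ^ 2 - √c) ^ 2 = c := by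
  have hsc : √c ≤ β ^ 2 := Real.sqrt_le_iff.mpr ⟨by positivity, by linarith⟩
  rw [psiB, Real.sq_sqrt (by linarith), sub_sub_cancel, Real.sq_sqrt hc]

end Bernoulli

/-- Subsection 4.2: for `β⁴ > c > 0` and `γ = √(β² - √c)`, there is a
unique `a ∈ (γ, β)` with `∫₀ᵃ ψ(ξ)⁻² dξ = a/c`; moreover `Q(0) = 0`, `Q` is strictly
decreasing on `(0,γ)`, strictly increasing on `(γ,β)` with `Q(x) → ∞` as `x → β⁻`, and
`a` is the unique zero of `Q` in `(0,β)`. -/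
theorem bernoulli_free_boundary_point
    (β c : ℝ) (hβ : 0 < β) (hc : 0 < c) (hcb : c < β ^ 4) :
    ∃ a : ℝ, a ∈ Set.Ioo (Real.sqrt (β ^ 2 - Real.sqrt c)) β ∧
      (∫ ξ in (0 : ℝ)..a, 1 / psiB β ξ ^ 2) = a / c ∧
      (∀ a' ∈ Set.Ioo (Real.sqrt (β ^ 2 - Real.sqrt c)) β,
        (∫ ξ in (0 : ℝ)..a', 1 / psiB β ξ ^ 2) = a' / c → a' = a) ∧
      Qfun β c 0 = 0 ∧
      StrictAntiOn (Qfun β c) (Set.Icc 0 (Real.sqrt (β ^ 2 - Real.sqrt c))) ∧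
      StrictMonoOn (Qfun β c) (Set.Ico (Real.sqrt (β ^ 2 - Real.sqrt c)) β) ∧
      Tendsto (Qfun β c) (nhdsWithin β (Set.Iio β)) atTop ∧
      ∀ x ∈ Set.Ioo (0 : ℝ) β, (Qfun β c x = 0 ↔ x = a) := by
  obtain ⟨hγ0, hγβ⟩ := sqrt_sq_sub_sqrt_mem_Ioo hβ hc hcb
  have hγ := psiB_sqrt_sq_sub_sqrt_sq hc.le hcb.le
  obtain ⟨a, ha, hQa⟩ := exists_mem_Ioo_Qfun_eq_zero hc hγ0 hγβ hγ
  have hzero : ∀ x ∈ Ioo 0 β, Qfun β c x = 0 ↔ x = a := fun x hx =>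
    ⟨eq_of_Qfun_eq_zero hγ0.le hγβ hγ ha hQa hx, fun hxa => hxa ▸ hQa⟩
  have hIoo : ∀ x ∈ Ioo √(β ^ 2 - √c) β, x ∈ Ioo (-β) β := fun x hx =>
    ⟨by linarith [hx.1], hx.2⟩
  refine ⟨a, ha, (Qfun_eq_zero_iff hc.ne' (hIoo a ha)).mp hQa, fun a' ha' h => ?_, Qfun_zero β c,
    strictAntiOn_Qfun hγβ hγ, strictMonoOn_Qfun hγ0.le hγ, tendsto_Qfun_atTop hβ hc, hzero⟩
  exact (hzero a' ⟨hγ0.trans ha'.1, ha'.2⟩).mp ((Qfun_eq_zero_iff hc.ne' (hIoo a' ha')).mpr h)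
end
end
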